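/- arXiv:1306.4026 — 3 statements merged into one kernel-verified Lean document; each statement's English description precedes it below -/
import Mathlib

section
/- Let P be the group on F_q × F_q with multiplication (a₁,b₁)*(a₂,b₂) = (a₁+a₂, b₁+b₂+a₁a₂^θ), where q = 2^(2n+1), n ≥ 1, θ = 2^(n+1). Then the subgroup generated by squares of elements of P equals the center Z(P). -/
@[ext]
structure SzP (F : Type*) (n : ℕ) where
  a : F
  b : F

namespace SzP

set_option linter.unusedSectionVars false

variable {F : Type*} [Field F] [CharP F 2] {n : ℕ}

instance : Mul (SzP F n) := ⟨fun x y => ⟨x.a + y.a, x.b + y.b + x.a * y.a ^ (2 ^ (n + 1))⟩⟩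
instance : One (SzP F n) := ⟨⟨0, 0⟩⟩
instance : Inv (SzP F n) := ⟨fun x => ⟨x.a, x.b + x.a ^ (1 + 2 ^ (n + 1))⟩⟩

@[simp] lemma mul_a (x y : SzP F n) : (x * y).a = x.a + y.a := rfl
@[simp] lemma mul_b (x y : SzP F n) : (x * y).b = x.b + y.b + x.a * y.a ^ (2 ^ (n + 1)) := rfl
@[simp] lemma one_a : (1 : SzP F n).a = 0 := rfl
@[simp] lemma one_b : (1 : SzP F n).b = 0 := rfl
@[simp] lemma inv_a (x : SzP F n) : (x⁻¹).a = x.a := rfl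
@[simp] lemma inv_b (x : SzP F n) : (x⁻¹).b = x.b + x.a ^ (1 + 2 ^ (n + 1)) := rfl

instance instGroup : Group (SzP F n) :=
  Group.ofLeftAxioms
    (fun x y z => by
      have h : ∀ u v : F, (u + v) ^ 2 ^ (n + 1) = u ^ 2 ^ (n + 1) + v ^ 2 ^ (n + 1) :=
        fun u v => add_pow_char_pow u v 2 (n+1)
      ext <;> simp [h] <;> ring)
    (fun x => by ext <;> simp)
    (fun x => by
      ext
      · simp [CharTwo.add_self_eq_zero]
      · simp only [mul_b, inv_b, inv_a, one_b, pow_add, pow_one]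
        ring_nf
        simp [CharTwo.two_eq_zero])

end SzP

/-!
Squares are (a,b)² = (0, a^(1+θ)), and every element with first coordinate 0 is central.
Conversely, a central (a,b) commutes with each (c,0), i.e. c·a^θ = a·c^θ for all c. Taking
c = 1 gives a^θ = a, so a ≠ 0 would force c^θ = c on all of F_q, which is impossible because
X^θ - X has at most θ < q roots. Hence the centre is {(0,b)}, and each (0,b) is a square since
a ↦ a^(1+θ) is a bijection (gcd(q-1, 1+θ) = 1).
-/

open Polynomial in
theorem exists_pow_ne_self_of_lt_card {R : Type*} [CommRing R] [IsDomain R] [Fintype R]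
    {m : ℕ} (hm : 1 < m) (hm_card : m < Fintype.card R) : ∃ c : R, c ^ m ≠ c := by
  by_contra! h
  have hdeg : (X ^ m - X : R[X]).degree = m := by
    rw [degree_sub_eq_left_of_degree_lt] <;> simp [hm]
  have hne : (X ^ m - X : R[X]) ≠ 0 := fun h0 => by simp [h0] at hdeg
  refine hne (eq_zero_of_degree_lt_of_eval_finset_eq_zero Finset.univ ?_ fun c _ => ?_)
  · rw [hdeg, Finset.card_univ]
    exact_mod_cast hm_card
  · rw [eval_sub, eval_pow, eval_X, h c, sub_self]

theorem pow_surjective_of_coprime_card_sub_one {K : Type*} [Field K] [Finite K] {k : ℕ}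
    (hk : k ≠ 0) (h_coprime : (Nat.card K - 1).Coprime k) :
    Function.Surjective (· ^ k : K → K) := by
  intro b
  rcases eq_or_ne b 0 with rfl | hb
  · exact ⟨0, zero_pow hk⟩
  · rw [← Nat.card_units] at h_coprime
    obtain ⟨u, hu⟩ := h_coprime.pow_left_bijective.2 (Units.mk0 b hb)
    exact ⟨u, by simpa using congrArg Units.val hu⟩

theorem Nat.coprime_two_pow_two_mul_add_one_sub_one_one_add_two_pow (n : ℕ) :
    (2 ^ (2 * n + 1) - 1).Coprime (1 + 2 ^ (n + 1)) := by
  rw [← Nat.isCoprime_iff_coprime]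
  -- Bezout: (2^(n+1) - 1)(2^(n+1) + 1) - 2 (2^(2n+1) - 1) = 1
  refine ⟨-2, 2 ^ (n + 1) - 1, ?_⟩
  push_cast [Nat.one_le_two_pow]
  ring

namespace SzP

variable {F : Type*} [Field F] [CharP F 2] {n : ℕ}

theorem sq_eq (x : SzP F n) : x ^ 2 = ⟨0, x.a ^ (1 + 2 ^ (n + 1))⟩ := by
  ext <;> simp [pow_two, pow_add, CharTwo.add_self_eq_zero]

theorem mem_center_of_a_eq_zero {z : SzP F n} (hz : z.a = 0) :
    z ∈ Subgroup.center (SzP F n) := by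
  refine Subgroup.mem_center_iff.2 fun g => ?_
  ext <;> simp [hz, add_comm]

theorem a_eq_zero_of_mem_center (hF : ∃ c : F, c ^ 2 ^ (n + 1) ≠ c) {z : SzP F n}
    (hz : z ∈ Subgroup.center (SzP F n)) : z.a = 0 := by
  have hcomm (c : F) : c * z.a ^ 2 ^ (n + 1) = z.a * c ^ 2 ^ (n + 1) := by
    have := congrArg SzP.b (Subgroup.mem_center_iff.1 hz ⟨c, 0⟩)
    simp only [mul_b] at this
    linear_combination this
  have hfix : z.a ^ 2 ^ (n + 1) = z.a := by simpa using hcomm 1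
  obtain ⟨c, hc⟩ := hF
  by_contra hza
  exact hc (mul_left_cancel₀ hza (by rw [← hcomm, hfix, mul_comm]))

theorem exists_sq_eq_of_a_eq_zero (hsurj : Function.Surjective (· ^ (1 + 2 ^ (n + 1)) : F → F))
    {z : SzP F n} (hz : z.a = 0) : ∃ x : SzP F n, x ^ 2 = z := by
  obtain ⟨a, ha⟩ := hsurj z.b
  exact ⟨⟨a, 0⟩, by ext <;> simp [sq_eq, hz, ha]⟩

end SzP

theorem SzP.closure_squares_eq_center (n : ℕ) (hn : 1 ≤ n)
    (F : Type*) [Field F] [Fintype F] [CharP F 2]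
    (hcard : Fintype.card F = 2 ^ (2 * n + 1)) :
    Subgroup.closure {y : SzP F n | ∃ x : SzP F n, x ^ 2 = y} =
      Subgroup.center (SzP F n) := by
  have h_frob : ∃ c : F, c ^ 2 ^ (n + 1) ≠ c :=
    exists_pow_ne_self_of_lt_card (Nat.one_lt_two_pow (by omega))
      (hcard ▸ Nat.pow_lt_pow_right (by norm_num) (by omega))
  have h_surj : Function.Surjective (· ^ (1 + 2 ^ (n + 1)) : F → F) :=
    pow_surjective_of_coprime_card_sub_one (by positivity)
      (by rw [Nat.card_eq_fintype_card, hcard]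
          exact Nat.coprime_two_pow_two_mul_add_one_sub_one_one_add_two_pow n)
  apply le_antisymm
  · rw [Subgroup.closure_le]
    rintro _ ⟨x, rfl⟩
    exact SzP.mem_center_of_a_eq_zero (by simp [SzP.sq_eq])
  · exact fun z hz => Subgroup.subset_closure (SzP.exists_sq_eq_of_a_eq_zero h_surj
      (SzP.a_eq_zero_of_mem_center h_frob hz))
end

section
/- Let q = 2^(2n+1) with n ≥ 1 and θ = 2^(n+1). Then the additive subgroup of F_q generated by all elements of the form x·y^θ + x^θ·y, with x, y ∈ F_q, equals all of F_q. -/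
/-!
Every `c : F` is a `(θ + 1)`-st power `d ^ (θ + 1)`, because `θ + 1` is prime to `q - 1`, and
`d ^ (θ + 1) * (x * y ^ θ + x ^ θ * y)` is again of the same form, evaluated at `(d * x, d * y)`.
So the set of values is stable under multiplication by `F`, and it is all of `F` as soon as it
contains a nonzero value. One is `a + a ^ θ` for `a` not a root of `X ^ θ + X`, which exists since
`θ < q`.
-/

open Polynomial Cardinal

theorem Nat.coprime_two_pow_sub_one_two_pow_add_one (n : ℕ) :
    (2 ^ (2 * n + 1) - 1).Coprime (2 ^ (n + 1) + 1) := by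
  rw [← Nat.isCoprime_iff_coprime]
  refine ⟨-2, 2 ^ (n + 1) - 1, ?_⟩
  push_cast [Nat.one_le_two_pow]
  ring

theorem FiniteField.exists_pow_eq_of_coprime {K : Type*} [Field K] [Fintype K] {k : ℕ}
    (hk0 : k ≠ 0) (hk : (Fintype.card K - 1).Coprime k) (c : K) : ∃ d : K, d ^ k = c := by
  classical
  rcases eq_or_ne c 0 with rfl | hc
  · exact ⟨0, zero_pow hk0⟩
  · have hkunits : (Nat.card Kˣ).Coprime k := by
      rwa [Nat.card_eq_fintype_card, Fintype.card_units]
    obtain ⟨u, hu⟩ := hkunits.pow_left_bijective.surjective (Units.mk0 c hc)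
    exact ⟨u, congrArg Units.val hu⟩

theorem exists_pow_add_self_ne_zero {R : Type*} [CommRing R] [IsDomain R] {k : ℕ}
    (hk1 : 1 < k) (hk : k < #R) : ∃ a : R, a ^ k + a ≠ 0 := by
  have hdeg : (X ^ k + X : R[X]).natDegree = k := by
    rw [natDegree_add_eq_left_of_natDegree_lt] <;> simp [hk1]
  have hne : (X ^ k + X : R[X]) ≠ 0 := by
    intro h
    rw [h, natDegree_zero] at hdeg
    omega
  obtain ⟨a, ha⟩ := exists_eval_ne_zero_of_natDegree_lt_card _ hne (by rwa [hdeg])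
  exact ⟨a, by simpa using ha⟩

theorem setOf_mul_pow_add_pow_mul_eq_univ {K : Type*} [Field K] {k : ℕ}
    (hroot : ∀ c : K, ∃ d : K, d ^ (k + 1) = c) (hne : ∃ x y : K, x * y ^ k + x ^ k * y ≠ 0) :
    {z : K | ∃ x y : K, z = x * y ^ k + x ^ k * y} = Set.univ := by
  obtain ⟨x, y, hxy⟩ := hne
  refine Set.eq_univ_of_forall fun w => ?_
  obtain ⟨d, hd⟩ := hroot (w / (x * y ^ k + x ^ k * y))
  refine ⟨d * x, d * y, ?_⟩
  calc w = d ^ (k + 1) * (x * y ^ k + x ^ k * y) := by rw [hd, div_mul_cancel₀ _ hxy]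
    _ = d * x * (d * y) ^ k + (d * x) ^ k * (d * y) := by ring

theorem addClosure_commutator_values_eq_top (n : ℕ) (hn : 1 ≤ n)
    (F : Type*) [Field F] [Fintype F] (hcard : Fintype.card F = 2 ^ (2 * n + 1)) :
    AddSubgroup.closure
        {z : F | ∃ x y : F, z = x * y ^ (2 ^ (n + 1)) + x ^ (2 ^ (n + 1)) * y} = ⊤ := by
  have hθq : 2 ^ (n + 1) < Fintype.card F := by
    rw [hcard]
    exact Nat.pow_lt_pow_right (by norm_num) (by omega)
  obtain ⟨a, ha⟩ := exists_pow_add_self_ne_zero (R := F) (Nat.one_lt_two_pow n.succ_ne_zero)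
    (by simpa only [mk_fintype, Nat.cast_lt] using hθq)
  have hroot : ∀ c : F, ∃ d : F, d ^ (2 ^ (n + 1) + 1) = c :=
    FiniteField.exists_pow_eq_of_coprime (Nat.succ_ne_zero _)
      (hcard ▸ Nat.coprime_two_pow_sub_one_two_pow_add_one n)
  rw [setOf_mul_pow_add_pow_mul_eq_univ hroot ⟨a, 1, by simpa [add_comm] using ha⟩,
    AddSubgroup.closure_univ]
end

section
/- Let {G_n} be a family of finite groups, p a fixed prime dividing each |G_n|, such that (1) distinct Sylow p-subgroups of G_n intersect trivially, (2) the number of Sylow p-subgroups of G_n tends to infinity, and (3) the proportion |E_n|/|s(G_n)| tends to 1, where E_n is the set of nontrivial p-subgroups of G_n and s(G_n) the set of all subgroups. Then the subgroup permutability degree p(G_n) = |{(H,K) ∈ s(G_n)² : HK = KH}| / |s(G_n)|² tends to 0 as n → ∞. -/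
/-!
If two nontrivial `p`-subgroups `X`, `Y` permute, then `XY` is a `p`-subgroup, so `X` and `Y` lie
in a common Sylow `p`-subgroup; when Sylow subgroups intersect trivially, this is the only Sylow
subgroup containing `X`. Sending `((X, Y), Q)` to `(X, gYg⁻¹)`, where `g` conjugates the Sylow
subgroup of `X` onto `Q`, is injective, so at most `e² / k` pairs of nontrivial `p`-subgroups
permute, where `e` counts the nontrivial `p`-subgroups and `k` the Sylow subgroups. Hence
`p(G) ≤ 1 - (1 - 1/k) (e/s)²` with `s` the number of subgroups, and the right side tends to `0`.
-/

open Pointwise Filter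

theorem Nat.card_subtype_add_card_subtype_le {α : Type*} [Finite α] (P Q : α → Prop) :
    Nat.card {x // P x} + Nat.card {x // Q x} ≤ Nat.card {x // P x ∧ Q x} + Nat.card α := by
  have hunion : _ + Nat.card {x // P x ∧ Q x} = Nat.card {x // P x} + Nat.card {x // Q x} :=
    Set.ncard_union_add_ncard_inter {x | P x} {x | Q x}
  have hle := Set.ncard_le_card ({x | P x} ∪ {x | Q x})
  omega

namespace Subgroup

variable {G : Type*} [Group G]

def Permutes (H K : Subgroup G) : Prop := (H : Set G) * K = K * H

def mulOfPermutes {H K : Subgroup G} (h : H.Permutes K) : Subgroup G where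
  carrier := H * K
  one_mem' := ⟨1, H.one_mem, 1, K.one_mem, one_mul 1⟩
  mul_mem' {x y} hx hy := by
    have hxy := Set.mul_mem_mul hx hy
    rwa [mul_assoc, ← mul_assoc (K : Set G), ← h, mul_assoc, ← mul_assoc, coe_mul_coe,
      coe_mul_coe] at hxy
  inv_mem' {x} hx := by
    have hx' := Set.inv_mem_inv.mpr hx
    rwa [mul_inv_rev, inv_coe_set, inv_coe_set, ← h] at hx'

theorem le_mulOfPermutes_left {H K : Subgroup G} (h : H.Permutes K) : H ≤ mulOfPermutes h :=
  fun x hx => ⟨x, hx, 1, K.one_mem, mul_one x⟩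

theorem le_mulOfPermutes_right {H K : Subgroup G} (h : H.Permutes K) : K ≤ mulOfPermutes h :=
  fun x hx => ⟨1, H.one_mem, x, hx, one_mul x⟩

theorem image_mk_eq_orbit (H K : Subgroup G) :
    ((↑) : G → G ⧸ K) '' H = MulAction.orbit H ((1 : G) : G ⧸ K) := by
  rw [Set.image_eq_range]
  congr 1
  funext h
  show _ = (h : G) • ((1 : G) : G ⧸ K)
  rw [MulAction.Quotient.smul_mk, smul_eq_mul, mul_one]

noncomputable def permutabilityDegree (G : Type*) [Group G] : ℝ :=
  Nat.card {HK : Subgroup G × Subgroup G // HK.1.Permutes HK.2} / (Nat.card (Subgroup G) : ℝ) ^ 2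

end Subgroup

open Subgroup

section PGroup

variable {p : ℕ} [Fact p.Prime] {G : Type*} [Group G] [Finite G] {H K : Subgroup G}

theorem IsPGroup.mulOfPermutes (hH : IsPGroup p H) (hK : IsPGroup p K) (h : H.Permutes K) :
    IsPGroup p (Subgroup.mulOfPermutes h) := by
  obtain ⟨a, ha⟩ := IsPGroup.iff_card.mp hK
  obtain ⟨b, hb⟩ := hH.card_orbit ((1 : G) : G ⧸ K)
  refine IsPGroup.iff_card.mpr ⟨a + b, ?_⟩
  calc Nat.card (Subgroup.mulOfPermutes h) = Nat.card ((H : Set G) * K : Set G) := rfl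
    _ = Nat.card K * Nat.card (((↑) : G → G ⧸ K) '' H) :=
      card_mul_eq_card_subgroup_mul_card_quotient K H
    _ = p ^ (a + b) := by rw [image_mk_eq_orbit, ha, hb, pow_add]

theorem IsPGroup.exists_le_sylow_of_permutes (hH : IsPGroup p H) (hK : IsPGroup p K)
    (h : H.Permutes K) : ∃ P : Sylow p G, H ≤ P ∧ K ≤ P :=
  have ⟨P, hP⟩ := (hH.mulOfPermutes hK h).exists_le_sylow
  ⟨P, (le_mulOfPermutes_left h).trans hP, (le_mulOfPermutes_right h).trans hP⟩

end PGroup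

abbrev IsNontrivialPSubgroup (p : ℕ) {G : Type*} [Group G] (H : Subgroup G) : Prop :=
  H ≠ ⊥ ∧ IsPGroup p H

theorem IsNontrivialPSubgroup.conj {p : ℕ} {G : Type*} [Group G] {H : Subgroup G}
    (hH : IsNontrivialPSubgroup p H) (g : G) : IsNontrivialPSubgroup p (MulAut.conj g • H) := by
  refine ⟨?_, hH.2.map _⟩
  rw [Ne, ← Subgroup.smul_bot (MulAut.conj g), smul_left_cancel_iff]
  exact hH.1

def commonSylowPairs (p : ℕ) (G : Type*) [Group G] : Set (Subgroup G × Subgroup G) :=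
  {XY | (IsNontrivialPSubgroup p XY.1 ∧ IsNontrivialPSubgroup p XY.2) ∧
    ∃ P : Sylow p G, XY.1 ≤ P ∧ XY.2 ≤ P}

def SylowTI (p : ℕ) (G : Type*) [Group G] : Prop :=
  ∀ P Q : Sylow p G, (P : Subgroup G) ≠ Q → (P : Subgroup G) ⊓ Q = ⊥

namespace SylowTI

variable {p : ℕ} {G : Type*} [Group G]

theorem eq_of_le (hTI : SylowTI p G) {X : Subgroup G} (hX : X ≠ ⊥) {P Q : Sylow p G}
    (hP : X ≤ P) (hQ : X ≤ Q) : P = Q := by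
  by_contra hPQ
  exact hX (le_bot_iff.mp (hTI P Q (fun h => hPQ (Sylow.ext h)) ▸ le_inf hP hQ))

theorem card_commonSylowPairs_mul_card_sylow_le [Fact p.Prime] [Finite G] (hTI : SylowTI p G) :
    Nat.card (commonSylowPairs p G) * Nat.card (Sylow p G) ≤
      Nat.card {H : Subgroup G // IsNontrivialPSubgroup p H} ^ 2 := by
  choose P hP using fun XY : commonSylowPairs p G => XY.2.2
  choose g hg using fun P Q : Sylow p G => MulAction.exists_smul_eq G P Q
  let Φ : _ × Sylow p G → {H : Subgroup G // IsNontrivialPSubgroup p H} ×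
      {H : Subgroup G // IsNontrivialPSubgroup p H} := fun XYQ =>
    (⟨XYQ.1.1.1, XYQ.1.2.1.1⟩,
      ⟨MulAut.conj (g (P XYQ.1) XYQ.2) • XYQ.1.1.2, XYQ.1.2.1.2.conj _⟩)
  have hΦ_le : ∀ XYQ, ((Φ XYQ).2 : Subgroup G) ≤ XYQ.2 := by
    rintro ⟨XY, Q⟩
    have := pointwise_smul_le_pointwise_smul_iff (a := MulAut.conj (g (P XY) Q)).mpr (hP XY).2
    rwa [← Sylow.coe_subgroup_smul, hg] at this
  have hΦ : Function.Injective Φ := by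
    rintro ⟨XY, Q⟩ ⟨XY', Q'⟩ h
    obtain ⟨h1, h2⟩ := Prod.ext_iff.mp h
    have hQ : Q = Q' :=
      hTI.eq_of_le (Φ (XY, Q)).2.2.1 (hΦ_le (XY, Q)) (h2 ▸ hΦ_le (XY', Q'))
    have hX : XY.1.1 = XY'.1.1 := congrArg Subtype.val h1
    have hP' : P XY = P XY' := hTI.eq_of_le XY.2.1.1.1 (hP XY).1 (hX ▸ (hP XY').1)
    have hY : XY.1.2 = XY'.1.2 := by
      have := congrArg Subtype.val h2
      simp only [Φ, hP', hQ] at this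
      exact smul_left_cancel _ this
    rw [Subtype.ext (Prod.ext hX hY), hQ]
  simpa [Nat.card_prod, sq] using Nat.card_le_card_of_injective Φ hΦ

theorem permutabilityDegree_le [Fact p.Prime] [Finite G] (hTI : SylowTI p G) :
    permutabilityDegree G ≤ 1 - (1 - 1 / (Nat.card (Sylow p G) : ℝ)) *
      ((Nat.card {H : Subgroup G // IsNontrivialPSubgroup p H} : ℝ) /
        Nat.card (Subgroup G)) ^ 2 := by
  set s := Nat.card (Subgroup G)
  set e := Nat.card {H : Subgroup G // IsNontrivialPSubgroup p H}
  set k := Nat.card (Sylow p G)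
  set a := Nat.card (commonSylowPairs p G)
  set t := Nat.card {HK : Subgroup G × Subgroup G // HK.1.Permutes HK.2}
  have hpairs : t + e ^ 2 ≤ a + s ^ 2 := by
    calc t + e ^ 2 = t + Nat.card {XY : Subgroup G × Subgroup G //
          IsNontrivialPSubgroup p XY.1 ∧ IsNontrivialPSubgroup p XY.2} := by
          rw [Nat.card_congr Equiv.subtypeProdEquivProd, Nat.card_prod, sq]
      _ ≤ Nat.card {XY : Subgroup G × Subgroup G // XY.1.Permutes XY.2 ∧
          IsNontrivialPSubgroup p XY.1 ∧ IsNontrivialPSubgroup p XY.2} +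
            Nat.card (Subgroup G × Subgroup G) :=
        Nat.card_subtype_add_card_subtype_le _ _
      _ ≤ a + s ^ 2 := by
        rw [Nat.card_prod, ← sq]
        gcongr
        refine Nat.card_le_card_of_injective (Subtype.impEmbedding _ _ ?_)
          (Function.Embedding.injective _)
        rintro XY ⟨h, hX, hY⟩
        exact ⟨⟨hX, hY⟩, hX.2.exists_le_sylow_of_permutes hY.2 h⟩
  have hk : (0 : ℝ) < k := Nat.cast_pos.mpr Nat.card_pos
  have hs : (0 : ℝ) < s := Nat.cast_pos.mpr Nat.card_pos
  have ha : (a : ℝ) ≤ e ^ 2 / k := by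
    rw [le_div_iff₀ hk]
    exact_mod_cast hTI.card_commonSylowPairs_mul_card_sylow_le
  have hpairs' : (t : ℝ) + e ^ 2 ≤ a + s ^ 2 := by exact_mod_cast hpairs
  rw [permutabilityDegree, div_le_iff₀ (by positivity)]
  calc (t : ℝ) ≤ s ^ 2 - e ^ 2 + e ^ 2 / k := by linarith
    _ = _ := by field_simp; ring

end SylowTI

theorem subgroup_permutability_degree_tendsto_zero_general
    (p : ℕ) (hp : p.Prime)
    (G : ℕ → Type*) [∀ n, Group (G n)] [∀ n, Finite (G n)]
    (hTI : ∀ n, ∀ P Q : Sylow p (G n),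
      (P : Subgroup (G n)) ≠ (Q : Subgroup (G n)) →
        (P : Subgroup (G n)) ⊓ (Q : Subgroup (G n)) = ⊥)
    (hSyl : Tendsto (fun n => Nat.card (Sylow p (G n))) atTop atTop)
    (hE : Tendsto
      (fun n =>
        (Nat.card {H : Subgroup (G n) // H ≠ ⊥ ∧ IsPGroup p H} : ℝ) /
          (Nat.card (Subgroup (G n)) : ℝ))
      atTop (nhds 1)) :
    Tendsto
      (fun n =>
        (Nat.card {HK : Subgroup (G n) × Subgroup (G n) //
            (HK.1 : Set (G n)) * (HK.2 : Set (G n)) = (HK.2 : Set (G n)) * (HK.1 : Set (G n))} : ℝ) /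
          ((Nat.card (Subgroup (G n)) : ℝ)) ^ 2)
      atTop (nhds 0) := by
  have : Fact p.Prime := ⟨hp⟩
  have hk : Tendsto (fun n => 1 / (Nat.card (Sylow p (G n)) : ℝ)) atTop (nhds 0) :=
    tendsto_one_div_atTop_nhds_zero_nat.comp hSyl
  have hbound := ((hk.const_sub 1).mul (hE.pow 2)).const_sub 1
  rw [sub_zero, one_pow, mul_one, sub_self] at hbound
  exact squeeze_zero (fun n => by positivity)
    (fun n => SylowTI.permutabilityDegree_le (hTI n)) hbound

theorem subgroup_permutability_degree_tendsto_zero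
    (p : ℕ) (hp : p.Prime)
    (G : ℕ → Type*) [∀ n, Group (G n)] [∀ n, Finite (G n)]
    (hdvd : ∀ n, p ∣ Nat.card (G n))
    (hTI : ∀ n, ∀ P Q : Sylow p (G n),
      (P : Subgroup (G n)) ≠ (Q : Subgroup (G n)) →
        (P : Subgroup (G n)) ⊓ (Q : Subgroup (G n)) = ⊥)
    (hSyl : Tendsto (fun n => Nat.card (Sylow p (G n))) atTop atTop)
    (hE : Tendsto
      (fun n =>
        (Nat.card {H : Subgroup (G n) // H ≠ ⊥ ∧ IsPGroup p H} : ℝ) /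
          (Nat.card (Subgroup (G n)) : ℝ))
      atTop (nhds 1)) :
    Tendsto
      (fun n =>
        (Nat.card {HK : Subgroup (G n) × Subgroup (G n) //
            (HK.1 : Set (G n)) * (HK.2 : Set (G n)) = (HK.2 : Set (G n)) * (HK.1 : Set (G n))} : ℝ) /
          ((Nat.card (Subgroup (G n)) : ℝ)) ^ 2)
      atTop (nhds 0) :=
  subgroup_permutability_degree_tendsto_zero_general p hp G hTI hSyl hE
end
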